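/- arXiv:1210.1414 — 5 statements merged into one kernel-verified Lean document; each statement's English description precedes it below -/
import Mathlib

section
/- Let K be an algebraically closed field and consider two bi-affine equations p₁vx + q₁v + r₁x + s₁ = 0 and p₂vx + q₂v + r₂x + s₂ = 0 in unknowns (v, x) ∈ K². Let R(v) = (p₁v + r₁)(q₂v + s₂) − (p₂v + r₂)(q₁v + s₁). If R has degree exactly 2, its two roots are distinct, and neither root v satisfies p₁v + r₁ = 0, then the set of pairs (v, x) ∈ K² with p₁v + r₁ ≠ 0 satisfying both equations has exactly 2 elements. (Generically the nearly well-posed initial value problem on two such quads has exactly two solutions.) -/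
open Polynomial

/-!
Solving the first equation for `x` (possible since `p₁v + r₁ ≠ 0`) and substituting into the
second turns the system into `R(v) = 0`, with `x` then determined by `v`. So the solutions are
the graph of `v ↦ -(q₁v + s₁)/(p₁v + r₁)` over the roots of `R`, and a polynomial of degree two
with two distinct roots has no others.
-/

theorem Polynomial.setOf_isRoot_eq_pair_of_natDegree_le_two {K : Type*} [Field K] {R : K[X]}
    (hR : R ≠ 0) (hdeg : R.natDegree ≤ 2) {v₁ v₂ : K} (hne : v₁ ≠ v₂)
    (h₁ : R.IsRoot v₁) (h₂ : R.IsRoot v₂) : {v | R.IsRoot v} = {v₁, v₂} := by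
  classical
  refine Set.Subset.antisymm (fun v hv => ?_) (Set.insert_subset h₁ (Set.singleton_subset_iff.2 h₂))
  by_contra hv'
  simp only [Set.mem_insert_iff, Set.mem_singleton_iff, not_or] at hv'
  have hmem : ∀ {w}, R.IsRoot w → w ∈ R.roots.toFinset := fun hw =>
    Multiset.mem_toFinset.2 ((mem_roots hR).2 hw)
  have hthree : 2 < R.roots.toFinset.card :=
    Finset.two_lt_card_iff.2 ⟨v, v₁, v₂, hmem hv, hmem h₁, hmem h₂, hv'.1, hv'.2, hne⟩
  have := (Multiset.toFinset_card_le R.roots).trans (card_roots' R)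
  omega

theorem biaffine_system_iff {K : Type*} [Field K] {p₁ q₁ r₁ s₁ p₂ q₂ r₂ s₂ v x : K}
    (hd : p₁ * v + r₁ ≠ 0) :
    (p₁ * v * x + q₁ * v + r₁ * x + s₁ = 0 ∧ p₂ * v * x + q₂ * v + r₂ * x + s₂ = 0) ↔
      x = -(q₁ * v + s₁) / (p₁ * v + r₁) ∧
        (p₁ * v + r₁) * (q₂ * v + s₂) - (p₂ * v + r₂) * (q₁ * v + s₁) = 0 := by
  constructor
  · rintro ⟨h₁, h₂⟩
    exact ⟨(eq_div_iff hd).2 (by linear_combination h₁),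
      by linear_combination (p₁ * v + r₁) * h₂ - (p₂ * v + r₂) * h₁⟩
  · rintro ⟨rfl, hres⟩
    refine ⟨by field_simp; ring, ?_⟩
    linear_combination (p₁ * v + r₁)⁻¹ * hres - (q₂ * v + s₂) * mul_inv_cancel₀ hd

theorem stmt4_general {K : Type*} [Field K] (p₁ q₁ r₁ s₁ p₂ q₂ r₂ s₂ : K)
    (R : Polynomial K)
    (hR : R = (C p₁ * X + C r₁) * (C q₂ * X + C s₂)
            - (C p₂ * X + C r₂) * (C q₁ * X + C s₁))
    (hdeg : R.degree = 2)
    (hdist : ∃ v₁ v₂ : K, v₁ ≠ v₂ ∧ R.IsRoot v₁ ∧ R.IsRoot v₂)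
    (hden : ∀ v : K, R.IsRoot v → p₁ * v + r₁ ≠ 0) :
    {vx : K × K | p₁ * vx.1 + r₁ ≠ 0 ∧
        p₁ * vx.1 * vx.2 + q₁ * vx.1 + r₁ * vx.2 + s₁ = 0 ∧
        p₂ * vx.1 * vx.2 + q₂ * vx.1 + r₂ * vx.2 + s₂ = 0}.Finite ∧
      {vx : K × K | p₁ * vx.1 + r₁ ≠ 0 ∧
        p₁ * vx.1 * vx.2 + q₁ * vx.1 + r₁ * vx.2 + s₁ = 0 ∧
        p₂ * vx.1 * vx.2 + q₂ * vx.1 + r₂ * vx.2 + s₂ = 0}.ncard = 2 := by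
  obtain ⟨v₁, v₂, hne, h₁, h₂⟩ := hdist
  have hroots : {v | R.IsRoot v} = {v₁, v₂} :=
    setOf_isRoot_eq_pair_of_natDegree_le_two (ne_zero_of_degree_gt (n := 0) (by simp [hdeg]))
      (natDegree_le_of_degree_le hdeg.le) hne h₁ h₂
  have hsol : {vx : K × K | p₁ * vx.1 + r₁ ≠ 0 ∧
        p₁ * vx.1 * vx.2 + q₁ * vx.1 + r₁ * vx.2 + s₁ = 0 ∧
        p₂ * vx.1 * vx.2 + q₂ * vx.1 + r₂ * vx.2 + s₂ = 0} =
      (fun v => (v, -(q₁ * v + s₁) / (p₁ * v + r₁))) '' {v | R.IsRoot v} := by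
    ext ⟨v, x⟩
    simp only [Set.mem_ofPred_eq, Set.mem_image, Prod.mk.injEq, IsRoot, hR, eval_sub, eval_mul,
      eval_add, eval_C, eval_X]
    constructor
    · rintro ⟨hd, hsys⟩
      obtain ⟨rfl, hres⟩ := (biaffine_system_iff hd).1 hsys
      exact ⟨v, by linear_combination hres, rfl, rfl⟩
    · rintro ⟨v, hres, rfl, rfl⟩
      have hd := hden v (by simpa [IsRoot, hR] using hres)
      exact ⟨hd, (biaffine_system_iff hd).2 ⟨rfl, by linear_combination hres⟩⟩
  rw [hsol, hroots, Set.ncard_image_of_injective _ fun a b h => congrArg Prod.fst h]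
  exact ⟨(Set.toFinite _).image _, Set.ncard_pair hne⟩

/-- Over an algebraically closed field, if the resultant `R(v)` of the two bi-affine
equations has degree exactly 2, two distinct roots, and neither root annihilates
`p₁v + r₁`, then the system has exactly two solutions: generically the nearly
well-posed initial value problem on two quads has exactly two solutions. -/
theorem stmt4 {K : Type*} [Field K] [IsAlgClosed K] (p₁ q₁ r₁ s₁ p₂ q₂ r₂ s₂ : K)
    (R : Polynomial K)
    (hR : R = (C p₁ * X + C r₁) * (C q₂ * X + C s₂)
            - (C p₂ * X + C r₂) * (C q₁ * X + C s₁))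
    (hdeg : R.degree = 2)
    (hdist : ∃ v₁ v₂ : K, v₁ ≠ v₂ ∧ R.IsRoot v₁ ∧ R.IsRoot v₂)
    (hden : ∀ v : K, R.IsRoot v → p₁ * v + r₁ ≠ 0) :
    {vx : K × K | p₁ * vx.1 + r₁ ≠ 0 ∧
        p₁ * vx.1 * vx.2 + q₁ * vx.1 + r₁ * vx.2 + s₁ = 0 ∧
        p₂ * vx.1 * vx.2 + q₂ * vx.1 + r₂ * vx.2 + s₂ = 0}.Finite ∧
      {vx : K × K | p₁ * vx.1 + r₁ ≠ 0 ∧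
        p₁ * vx.1 * vx.2 + q₁ * vx.1 + r₁ * vx.2 + s₁ = 0 ∧
        p₂ * vx.1 * vx.2 + q₂ * vx.1 + r₂ * vx.2 + s₂ = 0}.ncard = 2 :=
  stmt4_general p₁ q₁ r₁ s₁ p₂ q₂ r₂ s₂ R hR hdeg hdist hden
end

section
/- Let K be an algebraically closed field and keep the setting of three relations: Möbius data (a₁,b₁,c₁,d₁), (a₂,b₂,c₂,d₂) with a₁d₁ − b₁c₁ ≠ 0, a₂d₂ − b₂c₂ ≠ 0, a multi-affine g ∈ K[y₁,y₂,y₃], and the polynomial P ∈ K[x] of degree at most 3 satisfying P(x) = (c₁x + d₁)(c₂x + d₂)·g((a₁x + b₁)/(c₁x + d₁), (a₂x + b₂)/(c₂x + d₂), x) whenever c₁x + d₁ ≠ 0 and c₂x + d₂ ≠ 0. If P has degree exactly 3 and has three distinct roots, none of which is a root of (c₁x + d₁)(c₂x + d₂), then the set of triples (v, w, x) ∈ K³ satisfying v(c₁x + d₁) = a₁x + b₁, w(c₂x + d₂) = a₂x + b₂, and g(v, w, x) = 0, with c₁x + d₁ ≠ 0 and c₂x + d₂ ≠ 0, has exactly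 3 elements. (Generically the system of three multi-affine equations of Figure 2 has exactly three solutions; the initial value problem is nearly well-posed.) -/
open MvPolynomial

/-- A polynomial over a commutative ring is multi-affine if it has degree
at most 1 in each variable. -/
def MultiAffine {K : Type*} [CommRing K] {σ : Type*} (f : MvPolynomial σ K) : Prop :=
  ∀ i : σ, f.degreeOf i ≤ 1

/-!
Eliminating `v` and `w` through the two Möbius relations identifies a solution `(v, w, x)`
with its last coordinate `x`, and away from the poles `g(v, w, x) = 0` becomes `P(x) = 0`.
So the solutions are the graph points over the roots of `P`; a cubic with three distinct roots
has no others, and none of them is a pole.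
-/

namespace Polynomial

theorem setOf_isRoot_eq_of_card_eq_natDegree {R : Type*} [CommRing R] [IsDomain R]
    {p : R[X]} (hp : p ≠ 0) {s : Finset R} (hs : ∀ x ∈ s, p.IsRoot x)
    (hcard : s.card = p.natDegree) : {x | p.IsRoot x} = s := by
  classical
  have hsub : s ⊆ p.roots.toFinset := fun x hx => by
    simpa [mem_roots hp] using hs x hx
  have hroots : s = p.roots.toFinset := Finset.eq_of_subset_of_card_le hsub <|
    calc p.roots.toFinset.card ≤ Multiset.card p.roots := Multiset.toFinset_card_le _
      _ ≤ p.natDegree := card_roots' p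
      _ = s.card := hcard.symm
  ext x
  simp [hroots, mem_roots hp]

end Polynomial

theorem setOf_mobius_system_eq_image_isRoot {K : Type*} [Field K]
    (a₁ b₁ c₁ d₁ a₂ b₂ c₂ d₂ : K) (g : MvPolynomial (Fin 3) K) (P : Polynomial K)
    (hP : ∀ x : K, c₁ * x + d₁ ≠ 0 → c₂ * x + d₂ ≠ 0 →
      P.eval x = (c₁ * x + d₁) * (c₂ * x + d₂) *
        eval ![(a₁ * x + b₁) / (c₁ * x + d₁), (a₂ * x + b₂) / (c₂ * x + d₂), x] g)
    (hden : ∀ x : K, P.IsRoot x → (c₁ * x + d₁) * (c₂ * x + d₂) ≠ 0) :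
    {t : K × K × K | c₁ * t.2.2 + d₁ ≠ 0 ∧ c₂ * t.2.2 + d₂ ≠ 0 ∧
        t.1 * (c₁ * t.2.2 + d₁) = a₁ * t.2.2 + b₁ ∧
        t.2.1 * (c₂ * t.2.2 + d₂) = a₂ * t.2.2 + b₂ ∧
        eval ![t.1, t.2.1, t.2.2] g = 0} =
      (fun x => ((a₁ * x + b₁) / (c₁ * x + d₁), (a₂ * x + b₂) / (c₂ * x + d₂), x)) ''
        {x | P.IsRoot x} := by
  ext ⟨v, w, x⟩
  simp only [Set.mem_ofPred_eq, Set.mem_image, Prod.mk.injEq]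
  constructor
  · rintro ⟨hd₁, hd₂, hv, hw, hgx⟩
    obtain rfl : v = (a₁ * x + b₁) / (c₁ * x + d₁) := (eq_div_iff hd₁).mpr hv
    obtain rfl : w = (a₂ * x + b₂) / (c₂ * x + d₂) := (eq_div_iff hd₂).mpr hw
    refine ⟨x, ?_, rfl, rfl, rfl⟩
    simp [Polynomial.IsRoot, hP x hd₁ hd₂, hgx]
  · rintro ⟨x, hx, rfl, rfl, rfl⟩
    have hd := hden x hx
    have hgx := hP x (left_ne_zero_of_mul hd) (right_ne_zero_of_mul hd)
    rw [hx.eq_zero, eq_comm, mul_eq_zero] at hgx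
    exact ⟨left_ne_zero_of_mul hd, right_ne_zero_of_mul hd,
      div_mul_cancel₀ _ (left_ne_zero_of_mul hd), div_mul_cancel₀ _ (right_ne_zero_of_mul hd),
      hgx.resolve_left hd⟩

theorem stmt6_general {K : Type*} [Field K] (a₁ b₁ c₁ d₁ a₂ b₂ c₂ d₂ : K)
    (g : MvPolynomial (Fin 3) K)
    (P : Polynomial K)
    (hP : ∀ x : K, c₁ * x + d₁ ≠ 0 → c₂ * x + d₂ ≠ 0 →
      P.eval x = (c₁ * x + d₁) * (c₂ * x + d₂) *
        eval ![(a₁ * x + b₁) / (c₁ * x + d₁), (a₂ * x + b₂) / (c₂ * x + d₂), x] g)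
    (hdeg : P.degree = 3)
    (hroots : ∃ x₁ x₂ x₃ : K, x₁ ≠ x₂ ∧ x₁ ≠ x₃ ∧ x₂ ≠ x₃ ∧
      P.IsRoot x₁ ∧ P.IsRoot x₂ ∧ P.IsRoot x₃)
    (hden : ∀ x : K, P.IsRoot x → (c₁ * x + d₁) * (c₂ * x + d₂) ≠ 0) :
    {t : K × K × K | c₁ * t.2.2 + d₁ ≠ 0 ∧ c₂ * t.2.2 + d₂ ≠ 0 ∧
        t.1 * (c₁ * t.2.2 + d₁) = a₁ * t.2.2 + b₁ ∧
        t.2.1 * (c₂ * t.2.2 + d₂) = a₂ * t.2.2 + b₂ ∧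
        eval ![t.1, t.2.1, t.2.2] g = 0}.Finite ∧
      {t : K × K × K | c₁ * t.2.2 + d₁ ≠ 0 ∧ c₂ * t.2.2 + d₂ ≠ 0 ∧
        t.1 * (c₁ * t.2.2 + d₁) = a₁ * t.2.2 + b₁ ∧
        t.2.1 * (c₂ * t.2.2 + d₂) = a₂ * t.2.2 + b₂ ∧
        eval ![t.1, t.2.1, t.2.2] g = 0}.ncard = 3 := by
  classical
  obtain ⟨x₁, x₂, x₃, h₁₂, h₁₃, h₂₃, hx₁, hx₂, hx₃⟩ := hroots
  have hcard : ({x₁, x₂, x₃} : Finset K).card = 3 :=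
    Finset.card_eq_three.mpr ⟨x₁, x₂, x₃, h₁₂, h₁₃, h₂₃, rfl⟩
  have hrootSet : {x | P.IsRoot x} = ({x₁, x₂, x₃} : Finset K) :=
    Polynomial.setOf_isRoot_eq_of_card_eq_natDegree (by rintro rfl; simp at hdeg)
      (by simp only [Finset.mem_insert, Finset.mem_singleton]
          rintro x (rfl | rfl | rfl) <;> assumption)
      (by rw [hcard, Polynomial.natDegree_eq_of_degree_eq_some hdeg])
  have hinj : Function.Injective fun x : K =>
      ((a₁ * x + b₁) / (c₁ * x + d₁), (a₂ * x + b₂) / (c₂ * x + d₂), x) :=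
    fun _ _ h => congrArg (·.2.2) h
  rw [setOf_mobius_system_eq_image_isRoot a₁ b₁ c₁ d₁ a₂ b₂ c₂ d₂ g P hP hden, hrootSet]
  exact ⟨(Finset.finite_toSet _).image _, by
    rw [Set.ncard_image_of_injective _ hinj, Set.ncard_coe_finset, hcard]⟩

/-- Over an algebraically closed field, if the eliminant `P` of the three
multi-affine relations of Figure 2 has degree exactly 3 and three distinct roots,
none of which annihilates `(c₁x + d₁)(c₂x + d₂)`, then the system has exactly
three solutions: the initial value problem is nearly well-posed. -/
theorem stmt6 {K : Type*} [Field K] [IsAlgClosed K] (a₁ b₁ c₁ d₁ a₂ b₂ c₂ d₂ : K)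
    (h₁ : a₁ * d₁ - b₁ * c₁ ≠ 0) (h₂ : a₂ * d₂ - b₂ * c₂ ≠ 0)
    (g : MvPolynomial (Fin 3) K) (hg : MultiAffine g)
    (P : Polynomial K) (hPdeg : P.degree ≤ 3)
    (hP : ∀ x : K, c₁ * x + d₁ ≠ 0 → c₂ * x + d₂ ≠ 0 →
      P.eval x = (c₁ * x + d₁) * (c₂ * x + d₂) *
        eval ![(a₁ * x + b₁) / (c₁ * x + d₁), (a₂ * x + b₂) / (c₂ * x + d₂), x] g)
    (hdeg : P.degree = 3)
    (hroots : ∃ x₁ x₂ x₃ : K, x₁ ≠ x₂ ∧ x₁ ≠ x₃ ∧ x₂ ≠ x₃ ∧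
      P.IsRoot x₁ ∧ P.IsRoot x₂ ∧ P.IsRoot x₃)
    (hden : ∀ x : K, P.IsRoot x → (c₁ * x + d₁) * (c₂ * x + d₂) ≠ 0) :
    {t : K × K × K | c₁ * t.2.2 + d₁ ≠ 0 ∧ c₂ * t.2.2 + d₂ ≠ 0 ∧
        t.1 * (c₁ * t.2.2 + d₁) = a₁ * t.2.2 + b₁ ∧
        t.2.1 * (c₂ * t.2.2 + d₂) = a₂ * t.2.2 + b₂ ∧
        eval ![t.1, t.2.1, t.2.2] g = 0}.Finite ∧
      {t : K × K × K | c₁ * t.2.2 + d₁ ≠ 0 ∧ c₂ * t.2.2 + d₂ ≠ 0 ∧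
        t.1 * (c₁ * t.2.2 + d₁) = a₁ * t.2.2 + b₁ ∧
        t.2.1 * (c₂ * t.2.2 + d₂) = a₂ * t.2.2 + b₂ ∧
        eval ![t.1, t.2.1, t.2.2] g = 0}.ncard = 3 :=
  stmt6_general a₁ b₁ c₁ d₁ a₂ b₂ c₂ d₂ g P hP hdeg hroots hden
end

section
/- Let K be a field, let (aₐ,bₐ,cₐ,dₐ), (a_b,b_b,c_b,d_b), (a_c,b_c,c_c,d_c) ∈ K⁴ each satisfy ad − bc ≠ 0, and let g ∈ K[y₁,y₂,y₃,y₄] be a multi-affine polynomial. Consider the system in unknowns (u₅,u₆,u₇,u₈) ∈ K⁴: u₅(cₐu₆ + dₐ) = aₐu₆ + bₐ, u₇(c_b u₆ + d_b) = a_b u₆ + b_b, u₈(c_c u₇ + d_c) = a_c u₇ + b_c, and g(u₆,u₇,u₅,u₈) = 0, restricted to the domain where cₐu₆ + dₐ ≠ 0, c_b u₆ + d_b ≠ 0, and c_c u₇ + d_c ≠ 0. Then there exists a polynomial P ∈ K[x] of degree at most 4 whose value at x = u₆ equals the product of the three (cleared) denominators times g evaluated at the corresponding Möbius expressions in u₆,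 and if P is not the zero polynomial the system has at most 4 solutions. (The initial value problem of Figure 3, four multi-affine relations in four unknowns, has at most four solutions; this does not depend on the integrability of the equation.) -/
open MvPolynomial

/-! Clearing denominators: substitute for `(u₆, u₇, u₅, u₈)` the quotients `Nᵢ(x)/Dᵢ(x)`
of polynomials of degree `≤ 1` in `x = u₆` (for `u₈` through the composite Möbius map),
and multiply `g` by `∏ Dᵢ`. Since `g` is multi-affine, each monomial becomes a product of
one `Nᵢ` or `Dᵢ` per variable, so the result has degree `≤ 4`. A solution is determined
by `u₆`, which is a root of this polynomial; a nonzero one therefore leaves at most four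
solutions. -/

open Polynomial

section ClearDenoms

variable {σ : Type*} [Fintype σ]

section CommRing

variable {K : Type*} [CommRing K]

/- The polynomial `(∏ D)ⁿ · g(N/D)`; intended for `g` of degree `≤ n` in each variable, so that
`n - m i` does not truncate. -/
noncomputable def clearDenoms (g : MvPolynomial σ K) (n : ℕ) (N D : σ → K[X]) : K[X] :=
  ∑ m ∈ g.support, Polynomial.C (g.coeff m) * ∏ i, N i ^ m i * D i ^ (n - m i)

lemma natDegree_clearDenoms_le {g : MvPolynomial σ K} {n : ℕ} (hg : ∀ i, g.degreeOf i ≤ n)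
    {N D : σ → K[X]} (hN : ∀ i, (N i).natDegree ≤ 1) (hD : ∀ i, (D i).natDegree ≤ 1) :
    (clearDenoms g n N D).natDegree ≤ n * Fintype.card σ := by
  refine natDegree_sum_le_of_forall_le _ _ fun m hm => (natDegree_C_mul_le _ _).trans ?_
  refine (natDegree_prod_le _ _).trans ?_
  have hmn i : m i ≤ n := degreeOf_le_iff.mp (hg i) m hm
  have hfactor i : (N i ^ m i * D i ^ (n - m i)).natDegree ≤ n :=
    calc _ ≤ m i * 1 + (n - m i) * 1 := natDegree_mul_le.trans <|
          add_le_add (natDegree_pow_le_of_le _ (hN i)) (natDegree_pow_le_of_le _ (hD i))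
      _ ≤ n := by have := hmn i; omega
  calc _ ≤ ∑ _i : σ, n := Finset.sum_le_sum fun i _ => hfactor i
    _ = n * Fintype.card σ := by simp [mul_comm]

end CommRing

variable {K : Type*} [Field K]

lemma pow_mul_pow_sub_eq_pow_mul_div_pow {a d : K} (hd : d ≠ 0) {m n : ℕ} (hmn : m ≤ n) :
    a ^ m * d ^ (n - m) = d ^ n * (a / d) ^ m := by
  rw [div_pow, ← pow_mul_pow_sub d hmn]
  field_simp

lemma eval_clearDenoms {g : MvPolynomial σ K} {n : ℕ} (hg : ∀ i, g.degreeOf i ≤ n)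
    (N D : σ → K[X]) {x : K} (hD : ∀ i, (D i).eval x ≠ 0) :
    (clearDenoms g n N D).eval x =
      (∏ i, (D i).eval x) ^ n * MvPolynomial.eval (fun i => (N i).eval x / (D i).eval x) g := by
  rw [clearDenoms, eval_finsetSum, MvPolynomial.eval_eq', Finset.mul_sum]
  refine Finset.sum_congr rfl fun m hm => ?_
  have hmn i : m i ≤ n := degreeOf_le_iff.mp (hg i) m hm
  have hfactor i : (N i ^ m i * D i ^ (n - m i)).eval x =
      (D i).eval x ^ n * ((N i).eval x / (D i).eval x) ^ m i := by
    rw [Polynomial.eval_mul, Polynomial.eval_pow, Polynomial.eval_pow]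
    exact pow_mul_pow_sub_eq_pow_mul_div_pow (hD i) (hmn i)
  rw [Polynomial.eval_mul, Polynomial.eval_C, Polynomial.eval_prod,
    Finset.prod_congr rfl fun i _ => hfactor i, Finset.prod_mul_distrib, Finset.prod_pow]
  ring

end ClearDenoms

lemma finite_and_ncard_le_natDegree_of_injOn_isRoot {K α : Type*} [CommRing K] [IsDomain K]
    {P : K[X]} (hP : P ≠ 0) {S : Set α} {f : α → K} (hf : S.InjOn f)
    (hroot : ∀ t ∈ S, P.IsRoot (f t)) :
    S.Finite ∧ S.ncard ≤ P.natDegree := by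
  classical
  have hsub : f '' S ⊆ P.roots.toFinset := by
    rintro _ ⟨t, ht, rfl⟩
    simpa [mem_roots hP] using hroot t ht
  refine ⟨.of_finite_image (P.roots.toFinset.finite_toSet.subset hsub) hf, ?_⟩
  calc S.ncard = (f '' S).ncard := hf.ncard_image.symm
    _ ≤ P.roots.toFinset.card := by simpa using Set.ncard_le_ncard hsub
    _ ≤ P.natDegree := (Multiset.toFinset_card_le _).trans (card_roots' P)

section Mobius

variable {K : Type*} [Field K]

lemma affine_mobius {a b c d x : K} (c' d' : K) (he : c * x + d ≠ 0) :
    c' * ((a * x + b) / (c * x + d)) + d' =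
      ((c' * a + d' * c) * x + (c' * b + d' * d)) / (c * x + d) := by
  rw [eq_div_iff he, add_mul, mul_assoc, div_mul_cancel₀ _ he]
  ring

lemma mobius_comp {a b c d x : K} (a' b' c' d' : K) (he : c * x + d ≠ 0) :
    (a' * ((a * x + b) / (c * x + d)) + b') / (c' * ((a * x + b) / (c * x + d)) + d') =
      ((a' * a + b' * c) * x + (a' * b + b' * d)) /
        ((c' * a + d' * c) * x + (c' * b + d' * d)) := by
  rw [affine_mobius _ _ he, affine_mobius _ _ he, div_div_div_cancel_right₀ he]

end Mobius

section System

variable {K : Type*} [Field K] (aa ba ca da ab bb cb db ac bc cc dc : K)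

/- Numerators and denominators of `(u₆, u₇, u₅, u₈)` as functions of `x = u₆`; the last
entries compose `u₆ ↦ u₇ ↦ u₈`, i.e. multiply the two Möbius matrices. -/
noncomputable def systemNum : Fin 4 → K[X] :=
  ![Polynomial.X, Polynomial.C ab * Polynomial.X + Polynomial.C bb,
    Polynomial.C aa * Polynomial.X + Polynomial.C ba,
    Polynomial.C (ac * ab + bc * cb) * Polynomial.X + Polynomial.C (ac * bb + bc * db)]

noncomputable def systemDen : Fin 4 → K[X] :=
  ![1, Polynomial.C cb * Polynomial.X + Polynomial.C db,
    Polynomial.C ca * Polynomial.X + Polynomial.C da,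
    Polynomial.C (cc * ab + dc * cb) * Polynomial.X + Polynomial.C (cc * bb + dc * db)]

variable {aa ba ca da ab bb cb db ac bc cc dc}

lemma natDegree_systemNum_le (i : Fin 4) :
    (systemNum aa ba ab bb cb db ac bc i).natDegree ≤ 1 := by
  fin_cases i
  · exact natDegree_X_le
  all_goals exact natDegree_linear_le

lemma natDegree_systemDen_le (i : Fin 4) :
    (systemDen ca da ab bb cb db cc dc i).natDegree ≤ 1 := by
  fin_cases i
  · simp [systemDen]
  all_goals exact natDegree_linear_le

variable {x : K}

lemma eval_systemDen_ne_zero (h5 : ca * x + da ≠ 0) (h7 : cb * x + db ≠ 0)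
    (h8 : cc * ((ab * x + bb) / (cb * x + db)) + dc ≠ 0) (i : Fin 4) :
    (systemDen ca da ab bb cb db cc dc i).eval x ≠ 0 := by
  have h8' := (div_ne_zero_iff.mp (affine_mobius cc dc h7 ▸ h8)).1
  fin_cases i <;> simp [systemDen, h5, h7, h8']

lemma eval_systemNum_div_eval_systemDen (h7 : cb * x + db ≠ 0) :
    (fun i => (systemNum aa ba ab bb cb db ac bc i).eval x /
        (systemDen ca da ab bb cb db cc dc i).eval x) =
      ![x, (ab * x + bb) / (cb * x + db), (aa * x + ba) / (ca * x + da),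
        (ac * ((ab * x + bb) / (cb * x + db)) + bc) /
          (cc * ((ab * x + bb) / (cb * x + db)) + dc)] := by
  funext i
  fin_cases i <;> simp [systemNum, systemDen, mobius_comp ac bc cc dc h7]

lemma prod_eval_systemDen : ∏ i, (systemDen ca da ab bb cb db cc dc i).eval x =
    (ca * x + da) * (cb * x + db) * (cc * (ab * x + bb) + dc * (cb * x + db)) := by
  simp [systemDen, Fin.prod_univ_four]
  ring

end System

theorem stmt7_general {K : Type*} [Field K]
    (aa ba ca da ab bb cb db ac bc cc dc : K)
    (g : MvPolynomial (Fin 4) K) (hg : MultiAffine g) :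
    ∃ P : Polynomial K, P.degree ≤ 4 ∧
      (∀ x : K, ca * x + da ≠ 0 → cb * x + db ≠ 0 →
        cc * ((ab * x + bb) / (cb * x + db)) + dc ≠ 0 →
        P.eval x = (ca * x + da) * (cb * x + db) *
            (cc * (ab * x + bb) + dc * (cb * x + db)) *
          eval ![x, (ab * x + bb) / (cb * x + db), (aa * x + ba) / (ca * x + da),
            (ac * ((ab * x + bb) / (cb * x + db)) + bc) /
              (cc * ((ab * x + bb) / (cb * x + db)) + dc)] g) ∧
      (P ≠ 0 →
        {t : K × K × K × K | ca * t.2.1 + da ≠ 0 ∧ cb * t.2.1 + db ≠ 0 ∧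
            cc * t.2.2.1 + dc ≠ 0 ∧
            t.1 * (ca * t.2.1 + da) = aa * t.2.1 + ba ∧
            t.2.2.1 * (cb * t.2.1 + db) = ab * t.2.1 + bb ∧
            t.2.2.2 * (cc * t.2.2.1 + dc) = ac * t.2.2.1 + bc ∧
            eval ![t.2.1, t.2.2.1, t.1, t.2.2.2] g = 0}.Finite ∧
          {t : K × K × K × K | ca * t.2.1 + da ≠ 0 ∧ cb * t.2.1 + db ≠ 0 ∧
            cc * t.2.2.1 + dc ≠ 0 ∧
            t.1 * (ca * t.2.1 + da) = aa * t.2.1 + ba ∧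
            t.2.2.1 * (cb * t.2.1 + db) = ab * t.2.1 + bb ∧
            t.2.2.2 * (cc * t.2.2.1 + dc) = ac * t.2.2.1 + bc ∧
            eval ![t.2.1, t.2.2.1, t.1, t.2.2.2] g = 0}.ncard ≤ 4) := by
  set P := clearDenoms g 1 (systemNum aa ba ab bb cb db ac bc)
    (systemDen ca da ab bb cb db cc dc)
  have hdeg : P.natDegree ≤ 4 :=
    natDegree_clearDenoms_le hg natDegree_systemNum_le natDegree_systemDen_le
  refine ⟨P, degree_le_of_natDegree_le hdeg, fun x h5 h7 h8 => ?_, fun hP => ?_⟩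
  · rw [eval_clearDenoms hg _ _ (eval_systemDen_ne_zero h5 h7 h8),
      eval_systemNum_div_eval_systemDen h7, prod_eval_systemDen, pow_one]
  refine (finite_and_ncard_le_natDegree_of_injOn_isRoot hP (f := fun t => t.2.1) ?_ ?_
    ).imp_right hdeg.trans'
  · rintro ⟨u5, u6, u7, u8⟩ ⟨h5, h7, h8, e5, e7, e8, -⟩
      ⟨w5, w6, w7, w8⟩ ⟨-, -, -, e5', e7', e8', -⟩ (rfl : u6 = w6)
    obtain rfl : u7 = w7 := mul_right_cancel₀ h7 (e7.trans e7'.symm)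
    obtain rfl : u5 = w5 := mul_right_cancel₀ h5 (e5.trans e5'.symm)
    obtain rfl : u8 = w8 := mul_right_cancel₀ h8 (e8.trans e8'.symm)
    rfl
  · rintro ⟨u5, u6, u7, u8⟩ ⟨h5, h7, h8, e5, e7, e8, hg0⟩
    dsimp only at h5 h7 h8 e5 e7 e8 hg0 ⊢
    obtain rfl := eq_div_of_mul_eq h5 e5
    obtain rfl := eq_div_of_mul_eq h7 e7
    obtain rfl := eq_div_of_mul_eq h8 e8
    show P.eval u6 = 0
    rw [eval_clearDenoms hg _ _ (eval_systemDen_ne_zero h5 h7 h8),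
      eval_systemNum_div_eval_systemDen h7, hg0, mul_zero]

/-- The system of four multi-affine relations of Figure 3 (three Möbius relations
expressing `u₅, u₇` in terms of `u₆` and `u₈` in terms of `u₇`, and one multi-affine
relation `g(u₆,u₇,u₅,u₈) = 0`) admits an eliminant polynomial `P ∈ K[x]` of degree
at most 4, whose value at `x = u₆` is the product of the three cleared denominators
times `g` evaluated at the corresponding Möbius expressions; if `P ≠ 0` the system
has at most four solutions. This does not depend on integrability. -/
theorem stmt7 {K : Type*} [Field K]
    (aa ba ca da ab bb cb db ac bc cc dc : K)
    (ha : aa * da - ba * ca ≠ 0) (hb : ab * db - bb * cb ≠ 0)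
    (hc : ac * dc - bc * cc ≠ 0)
    (g : MvPolynomial (Fin 4) K) (hg : MultiAffine g) :
    ∃ P : Polynomial K, P.degree ≤ 4 ∧
      (∀ x : K, ca * x + da ≠ 0 → cb * x + db ≠ 0 →
        cc * ((ab * x + bb) / (cb * x + db)) + dc ≠ 0 →
        P.eval x = (ca * x + da) * (cb * x + db) *
            (cc * (ab * x + bb) + dc * (cb * x + db)) *
          eval ![x, (ab * x + bb) / (cb * x + db), (aa * x + ba) / (ca * x + da),
            (ac * ((ab * x + bb) / (cb * x + db)) + bc) /
              (cc * ((ab * x + bb) / (cb * x + db)) + dc)] g) ∧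
      (P ≠ 0 →
        {t : K × K × K × K | ca * t.2.1 + da ≠ 0 ∧ cb * t.2.1 + db ≠ 0 ∧
            cc * t.2.2.1 + dc ≠ 0 ∧
            t.1 * (ca * t.2.1 + da) = aa * t.2.1 + ba ∧
            t.2.2.1 * (cb * t.2.1 + db) = ab * t.2.1 + bb ∧
            t.2.2.2 * (cc * t.2.2.1 + dc) = ac * t.2.2.1 + bc ∧
            eval ![t.2.1, t.2.2.1, t.1, t.2.2.2] g = 0}.Finite ∧
          {t : K × K × K × K | ca * t.2.1 + da ≠ 0 ∧ cb * t.2.1 + db ≠ 0 ∧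
            cc * t.2.2.1 + dc ≠ 0 ∧
            t.1 * (ca * t.2.1 + da) = aa * t.2.1 + ba ∧
            t.2.2.1 * (cb * t.2.1 + db) = ab * t.2.1 + bb ∧
            t.2.2.2 * (cc * t.2.2.1 + dc) = ac * t.2.2.1 + bc ∧
            eval ![t.2.1, t.2.2.1, t.1, t.2.2.2] g = 0}.ncard ≤ 4) :=
  stmt7_general aa ba ca da ab bb cb db ac bc cc dc g hg
end

section
/- Let K be a field, α₁, α₂, α₃ ∈ K, and u, u₁, u₂, u₃ ∈ K with u₁ ≠ u₂, u₁ ≠ u₃, u₂ ≠ u₃. Define u₁₂ = u − (α₁ − α₂)/(u₁ − u₂), u₁₃ = u − (α₁ − α₃)/(u₁ − u₃), u₂₃ = u − (α₂ − α₃)/(u₂ − u₃), and assume u₁₂ ≠ u₁₃, u₁₂ ≠ u₂₃, u₁₃ ≠ u₂₃. Then the three values u₁ − (α₂ − α₃)/(u₁₂ − u₁₃), u₂ − (α₁ − α₃)/(u₁₂ − u₂₃), and u₃ − (α₁ − α₂)/(u₁₃ − u₂₃) are all equal. (The discrete potential KdV equation is multi-dimensionally consistent: the value u₁₂₃ at the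 far corner of a cube can be computed consistently via any of the three faces.) -/
/-!
`solve α β u v w = u - (α - β) / (v - w)` is the value at the corner opposite `u` of an H1 quad
whose other corners are `v`, `w`. On the bottom faces of the cube,
`u₁₂ - u₁₃ = D / ((u₁ - u₂) (u₁ - u₃))` with `D` linear in `u₁, u₂, u₃`, so solving the face
through `u₁` gives `u₁₂₃` as the ratio `corner` of a quadratic and the linear form `D`, independent
of `u` (the tetrahedron property). This ratio is invariant under simultaneous permutations of the
`αᵢ` and the `uᵢ`, so the three faces agree.
-/

namespace H1

variable {K : Type*} [Field K]

def solve (α β u v w : K) : K := u - (α - β) / (v - w)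

def cornerDenom (α₁ α₂ α₃ u₁ u₂ u₃ : K) : K :=
  (α₂ - α₃) * u₁ + (α₃ - α₁) * u₂ + (α₁ - α₂) * u₃

def corner (α₁ α₂ α₃ u₁ u₂ u₃ : K) : K :=
  ((α₃ - α₂) * u₂ * u₃ + (α₁ - α₃) * u₃ * u₁ + (α₂ - α₁) * u₁ * u₂) /
    cornerDenom α₁ α₂ α₃ u₁ u₂ u₃

theorem solve_comm (α β u v w : K) : solve β α u w v = solve α β u v w := by
  rw [solve, solve, ← neg_sub α, ← neg_sub v, neg_div_neg_eq]

theorem solve_sub_solve (α₁ α₂ α₃ u u₁ u₂ u₃ : K) (h₁₂ : u₁ ≠ u₂) (h₁₃ : u₁ ≠ u₃) :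
    solve α₁ α₂ u u₁ u₂ - solve α₁ α₃ u u₁ u₃ =
      cornerDenom α₁ α₂ α₃ u₁ u₂ u₃ / ((u₁ - u₂) * (u₁ - u₃)) := by
  have := sub_ne_zero.mpr h₁₂
  have := sub_ne_zero.mpr h₁₃
  rw [solve, solve, cornerDenom]
  field_simp
  ring

theorem solve_solve_eq_corner (α₁ α₂ α₃ u u₁ u₂ u₃ : K) (h₁₂ : u₁ ≠ u₂) (h₁₃ : u₁ ≠ u₃)
    (hne : solve α₁ α₂ u u₁ u₂ ≠ solve α₁ α₃ u u₁ u₃) :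
    solve α₂ α₃ u₁ (solve α₁ α₂ u u₁ u₂) (solve α₁ α₃ u u₁ u₃) =
      corner α₁ α₂ α₃ u₁ u₂ u₃ := by
  have hdiff := solve_sub_solve α₁ α₂ α₃ u u₁ u₂ u₃ h₁₂ h₁₃
  have h₁₂' := sub_ne_zero.mpr h₁₂
  have h₁₃' := sub_ne_zero.mpr h₁₃
  have hD : cornerDenom α₁ α₂ α₃ u₁ u₂ u₃ ≠ 0 := by
    intro hD
    rw [hD, zero_div, sub_eq_zero] at hdiff
    exact hne hdiff
  rw [solve, hdiff, corner]
  field_simp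
  rw [cornerDenom]
  ring

theorem corner_swap (α₁ α₂ α₃ u₁ u₂ u₃ : K) :
    corner α₂ α₁ α₃ u₂ u₁ u₃ = corner α₁ α₂ α₃ u₁ u₂ u₃ := by
  rw [corner, corner, ← neg_div_neg_eq]
  congr 1
  · ring
  · rw [cornerDenom, cornerDenom]
    ring

theorem corner_rotate (α₁ α₂ α₃ u₁ u₂ u₃ : K) :
    corner α₃ α₁ α₂ u₃ u₁ u₂ = corner α₁ α₂ α₃ u₁ u₂ u₃ := by
  rw [corner, corner, cornerDenom, cornerDenom]
  congr 1 <;> ring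

end H1

open H1 in
/-- Multi-dimensional consistency of the discrete potential KdV equation: the
value `u₁₂₃` at the far corner of a cube can be computed consistently via any of
the three top faces. -/
theorem stmt11 {K : Type*} [Field K] (α₁ α₂ α₃ u u₁ u₂ u₃ u₁₂ u₁₃ u₂₃ : K)
    (h12 : u₁ ≠ u₂) (h13 : u₁ ≠ u₃) (h23 : u₂ ≠ u₃)
    (e12 : u₁₂ = u - (α₁ - α₂) / (u₁ - u₂))
    (e13 : u₁₃ = u - (α₁ - α₃) / (u₁ - u₃))
    (e23 : u₂₃ = u - (α₂ - α₃) / (u₂ - u₃))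
    (d1 : u₁₂ ≠ u₁₃) (d2 : u₁₂ ≠ u₂₃) (d3 : u₁₃ ≠ u₂₃) :
    u₁ - (α₂ - α₃) / (u₁₂ - u₁₃) = u₂ - (α₁ - α₃) / (u₁₂ - u₂₃) ∧
      u₁ - (α₂ - α₃) / (u₁₂ - u₁₃) = u₃ - (α₁ - α₂) / (u₁₃ - u₂₃) := by
  have s₁₂ : u₁₂ = solve α₁ α₂ u u₁ u₂ := e12
  have s₁₃ : u₁₃ = solve α₁ α₃ u u₁ u₃ := e13
  have s₂₃ : u₂₃ = solve α₂ α₃ u u₂ u₃ := e23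
  have face₁ : solve α₂ α₃ u₁ u₁₂ u₁₃ = corner α₁ α₂ α₃ u₁ u₂ u₃ := by
    rw [s₁₂, s₁₃] at d1 ⊢
    exact solve_solve_eq_corner α₁ α₂ α₃ u u₁ u₂ u₃ h12 h13 d1
  have face₂ : solve α₁ α₃ u₂ u₁₂ u₂₃ = corner α₁ α₂ α₃ u₁ u₂ u₃ := by
    rw [s₁₂, s₂₃, ← solve_comm α₁ α₂ u u₁ u₂] at d2 ⊢
    rw [solve_solve_eq_corner α₂ α₁ α₃ u u₂ u₁ u₃ h12.symm h23 d2, corner_swap]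
  have face₃ : solve α₁ α₂ u₃ u₁₃ u₂₃ = corner α₁ α₂ α₃ u₁ u₂ u₃ := by
    rw [s₁₃, s₂₃, ← solve_comm α₁ α₃ u u₁ u₃, ← solve_comm α₂ α₃ u u₂ u₃] at d3 ⊢
    rw [solve_solve_eq_corner α₃ α₁ α₂ u u₃ u₁ u₂ h13.symm h23.symm d3, corner_rotate]
  exact ⟨face₁.trans face₂.symm, face₁.trans face₃.symm⟩
end

section
/- Let K be a field, α₁, α₂, α₃ ∈ K, and u, u₁, u₂, u₃ ∈ K with u₁ ≠ u₂ and u₁ ≠ u₃. Define u₁₂ = u − (α₁ − α₂)/(u₁ − u₂) and u₁₃ = u − (α₁ − α₃)/(u₁ − u₃), and let D = u₁(α₂ − α₃) + u₂(α₃ − α₁) + u₃(α₁ − α₂). If D ≠ 0, then u₁₂ ≠ u₁₃ and u₁ − (α₂ − α₃)/(u₁₂ − u₁₃) = (u₁u₂(α₂ − α₁) + u₂u₃(α₃ − α₂) + u₃u₁(α₁ − α₃)) / D. In particular, the value u₁₂₃ obtained by solving the discrete potential KdV equation around a cube depends only on (u₁, α₁), (u₂, α₂), (u₃, α₃), is independent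 of u, and is invariant under simultaneous permutations of the indices 1, 2, 3. -/
/-! The two side faces give `u₁₂ - u₁₃ = D / ((u₁ - u₂)(u₁ - u₃))`, so the top face yields
`u₁₂₃ = u₁ - (α₂ - α₃)(u₁ - u₂)(u₁ - u₃) / D`; clearing `D` leaves the polynomial identity
`u₁ D - (α₂ - α₃)(u₁ - u₂)(u₁ - u₃) = u₁u₂(α₂ - α₁) + u₂u₃(α₃ - α₂) + u₃u₁(α₁ - α₃)`,
in which `u` no longer appears. Its right-hand side and `D` are both alternating in the indices,
so their quotient is symmetric. -/

section H1Cube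

variable {K : Type*} [Field K] (α₁ α₂ α₃ u₁ u₂ u₃ : K)

theorem h1_sub_sides_eq {u : K} (h12 : u₁ ≠ u₂) (h13 : u₁ ≠ u₃) :
    (u - (α₁ - α₂) / (u₁ - u₂)) - (u - (α₁ - α₃) / (u₁ - u₃)) =
      (u₁ * (α₂ - α₃) + u₂ * (α₃ - α₁) + u₃ * (α₁ - α₂)) / ((u₁ - u₂) * (u₁ - u₃)) := by
  have h12' : u₁ - u₂ ≠ 0 := sub_ne_zero.mpr h12
  have h13' : u₁ - u₃ ≠ 0 := sub_ne_zero.mpr h13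
  field_simp
  ring

theorem h1_top_numerator_eq :
    u₁ * (u₁ * (α₂ - α₃) + u₂ * (α₃ - α₁) + u₃ * (α₁ - α₂)) -
        (α₂ - α₃) * ((u₁ - u₂) * (u₁ - u₃)) =
      u₁ * u₂ * (α₂ - α₁) + u₂ * u₃ * (α₃ - α₂) + u₃ * u₁ * (α₁ - α₃) := by
  ring

theorem h1_top_eq {D : K} (hD : D = u₁ * (α₂ - α₃) + u₂ * (α₃ - α₁) + u₃ * (α₁ - α₂))
    (hD0 : D ≠ 0) :
    u₁ - (α₂ - α₃) / (D / ((u₁ - u₂) * (u₁ - u₃))) =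
      (u₁ * u₂ * (α₂ - α₁) + u₂ * u₃ * (α₃ - α₂) + u₃ * u₁ * (α₁ - α₃)) / D := by
  rw [div_div_eq_mul_div, eq_div_iff hD0, sub_mul, div_mul_cancel₀ _ hD0,
    ← h1_top_numerator_eq, hD]

end H1Cube

/-- For the discrete potential KdV equation, if
`D = u₁(α₂ - α₃) + u₂(α₃ - α₁) + u₃(α₁ - α₂) ≠ 0` then `u₁₂ ≠ u₁₃` and the value
`u₁₂₃ = u₁ - (α₂ - α₃)/(u₁₂ - u₁₃)` at the far corner of the cube equals
`(u₁u₂(α₂ - α₁) + u₂u₃(α₃ - α₂) + u₃u₁(α₁ - α₃)) / D`; in particular it depends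
only on `(u₁,α₁), (u₂,α₂), (u₃,α₃)`, is independent of `u`, and is invariant
under simultaneous permutations of the indices `1, 2, 3`. -/
theorem stmt12 {K : Type*} [Field K] (α₁ α₂ α₃ u u₁ u₂ u₃ u₁₂ u₁₃ D : K)
    (h12 : u₁ ≠ u₂) (h13 : u₁ ≠ u₃)
    (e12 : u₁₂ = u - (α₁ - α₂) / (u₁ - u₂))
    (e13 : u₁₃ = u - (α₁ - α₃) / (u₁ - u₃))
    (hD : D = u₁ * (α₂ - α₃) + u₂ * (α₃ - α₁) + u₃ * (α₁ - α₂))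
    (hD0 : D ≠ 0) :
    u₁₂ ≠ u₁₃ ∧
      u₁ - (α₂ - α₃) / (u₁₂ - u₁₃) =
        (u₁ * u₂ * (α₂ - α₁) + u₂ * u₃ * (α₃ - α₂) + u₃ * u₁ * (α₁ - α₃)) / D := by
  have hsides : u₁₂ - u₁₃ = D / ((u₁ - u₂) * (u₁ - u₃)) := by
    rw [e12, e13, hD]
    exact h1_sub_sides_eq α₁ α₂ α₃ u₁ u₂ u₃ h12 h13
  have hsides_ne : u₁₂ - u₁₃ ≠ 0 := by
    rw [hsides]
    exact div_ne_zero hD0 (mul_ne_zero (sub_ne_zero.mpr h12) (sub_ne_zero.mpr h13))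
  refine ⟨sub_ne_zero.mp hsides_ne, ?_⟩
  rw [hsides]
  exact h1_top_eq α₁ α₂ α₃ u₁ u₂ u₃ hD hD0
end
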